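/- Let k be a field with char(k) ≠ 2, V₆ a 6-dimensional k-vector space, λ ∈ V₆∨ a nonzero linear form, V₅ = ker(λ), and A ⊆ ⋀³V₆ a Lagrangian subspace (dim A = 10 and a∧a′ = 0 for all a, a′ ∈ A). Let W := λ⌟A = {λ⌟ξ : ξ ∈ A} (a subspace of ⋀²V₅) and fix a nonzero element e of the one-dimensional space ⋀⁵V₅. Then there exists a unique linear map q from V₆ to the space of bilinear forms on W such that for all v ∈ V₆ and all ξ, ξ′ ∈ A: q(v)(λ⌟ξ, λ⌟ξ′)·e = v∧(λ⌟ξ)∧(λ⌟ξ′) − λ(v)·(ξ∧(λ⌟ξ′)) in ⋀⁵V₆. Moreover each bilinear form q(v) is symmetric, and for every v ∈ V₅ and w, w′ ∈ W one has q(v)(w, w′)·e = v∧w∧w′. -/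

import Mathlib

noncomputable section

/-- For a subspace `U` of `V`, the subspace `⋀ⁿU` of the exterior algebra of `V` spanned by
`n`-fold wedge products of elements of `U`.  Taking `U = ⊤` gives `⋀ⁿV`. -/
def wedgePow {k V : Type*} [Field k] [AddCommGroup V] [Module k V]
    (U : Submodule k V) (n : ℕ) : Submodule k (ExteriorAlgebra k V) :=
  (Submodule.map (ExteriorAlgebra.ι k) U) ^ n

/-- Left contraction (interior product) by a linear form on the exterior algebra. -/
def contr {k V : Type*} [Field k] [AddCommGroup V] [Module k V]
    (lam : Module.Dual k V) : ExteriorAlgebra k V →ₗ[k] ExteriorAlgebra k V :=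
  CliffordAlgebra.contractLeft (Q := (0 : QuadraticForm k V)) lam

/-- The defining property of the family of quadrics `q` in the Lagrangian-to-GM direction of
the GM–Lagrangian correspondence: for all `v ∈ V₆` and `ξ, ξ′ ∈ A`,
`q(v)(λ⌟ξ, λ⌟ξ′)·e = v∧(λ⌟ξ)∧(λ⌟ξ′) − λ(v)·(ξ∧(λ⌟ξ′))` in `⋀⁵V₆`. -/
def IsGMQuadricFor {k V₆ : Type*} [Field k] [AddCommGroup V₆] [Module k V₆]
    (lam : Module.Dual k V₆) (A : Submodule k (ExteriorAlgebra k V₆))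
    (e : ExteriorAlgebra k V₆)
    (q : V₆ →ₗ[k] ↥(Submodule.map (contr lam) A) →ₗ[k]
      ↥(Submodule.map (contr lam) A) →ₗ[k] k) : Prop :=
  ∀ (v : V₆) (ξ : ExteriorAlgebra k V₆) (hξ : ξ ∈ A)
    (ξ' : ExteriorAlgebra k V₆) (hξ' : ξ' ∈ A),
    q v ⟨contr lam ξ, Submodule.mem_map_of_mem hξ⟩
        ⟨contr lam ξ', Submodule.mem_map_of_mem hξ'⟩ • e =
      ExteriorAlgebra.ι k v * contr lam ξ * contr lam ξ' - lam v • (ξ * contr lam ξ')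

namespace LagGM

open ExteriorAlgebra

variable {k V : Type*} [Field k] [AddCommGroup V] [Module k V] (lam : Module.Dual k V)

lemma contr_ι_mul (v : V) (x : ExteriorAlgebra k V) :
    contr lam (ι k v * x) = lam v • x - ι k v * contr lam x :=
  CliffordAlgebra.contractLeft_ι_mul lam v x

lemma contr_ι (v : V) : contr lam (ι k v) = algebraMap k _ (lam v) :=
  CliffordAlgebra.contractLeft_ι _ _ v

lemma contr_algebraMap (r : k) : contr lam (algebraMap k (ExteriorAlgebra k V) r) = 0 :=
  CliffordAlgebra.contractLeft_algebraMap _ _ r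

lemma contr_one : contr lam (1 : ExteriorAlgebra k V) = 0 :=
  CliffordAlgebra.contractLeft_one _ _

lemma contr_contr (x : ExteriorAlgebra k V) : contr lam (contr lam x) = 0 :=
  CliffordAlgebra.contractLeft_contractLeft lam x

lemma ι_swap (a b : V) : ι k a * ι k b = -(ι k b * ι k a) :=
  eq_neg_of_add_eq_zero_left (ι_add_mul_swap a b)

lemma wedgePow_succ (U : Submodule k V) (n : ℕ) :
    wedgePow U (n+1) = Submodule.map (ι k) U * wedgePow U n := by
  rw [wedgePow, wedgePow, pow_succ']

lemma mem_wedgePow_mul {U : Submodule k V} {m n : ℕ} {x y : ExteriorAlgebra k V}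
    (hx : x ∈ wedgePow U m) (hy : y ∈ wedgePow U n) : x * y ∈ wedgePow U (m+n) := by
  rw [wedgePow, pow_add]; exact Submodule.mul_mem_mul hx hy

lemma mem_one_wedgePow (r : k) :
    algebraMap k (ExteriorAlgebra k V) r ∈ wedgePow (U) 0 :=
  Submodule.mem_one.mpr ⟨r, rfl⟩

lemma contr_mem : ∀ n : ℕ, ∀ x ∈ wedgePow (⊤ : Submodule k V) (n+1),
    contr lam x ∈ wedgePow (⊤ : Submodule k V) n := by
  intro n
  induction n with
  | zero =>
    intro x hx
    rw [wedgePow, pow_one] at hx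
    obtain ⟨v, -, rfl⟩ := hx
    rw [contr_ι]
    exact mem_one_wedgePow _
  | succ n ih =>
    intro x hx
    rw [wedgePow_succ] at hx
    refine Submodule.mul_induction_on hx ?_ ?_
    · rintro m ⟨v, -, rfl⟩ y hy
      rw [contr_ι_mul]
      refine Submodule.sub_mem _ (Submodule.smul_mem _ _ hy) ?_
      rw [wedgePow_succ]
      exact Submodule.mul_mem_mul ⟨v, trivial, rfl⟩ (ih y hy)
    · intro a b ha hb
      rw [map_add]
      exact Submodule.add_mem _ ha hb

lemma contr_mul : ∀ n : ℕ, ∀ x ∈ wedgePow (⊤ : Submodule k V) n,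
    ∀ y : ExteriorAlgebra k V,
    contr lam (x * y) = contr lam x * y + ((-1 : k)^n) • (x * contr lam y) := by
  intro n
  induction n with
  | zero =>
    intro x hx y
    rw [wedgePow, pow_zero] at hx
    obtain ⟨r, rfl⟩ := Submodule.mem_one.mp hx
    rw [contr_algebraMap, zero_mul, zero_add, pow_zero, one_smul,
      ← Algebra.smul_def, map_smul, Algebra.smul_def]
  | succ n ih =>
    intro x hx y
    rw [wedgePow_succ] at hx
    refine Submodule.mul_induction_on hx ?_ ?_
    · rintro m ⟨v, -, rfl⟩ z hz
      rw [mul_assoc, contr_ι_mul, contr_ι_mul, ih z hz y, sub_mul, smul_mul_assoc,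
        mul_add]
      simp only [mul_smul_comm, ← mul_assoc, pow_succ, mul_neg_one, neg_smul, smul_neg]
      abel
    · intro a b ha hb
      simp only [map_add, add_mul, smul_add]
      rw [ha, hb]
      abel

lemma central : ∀ y ∈ wedgePow (⊤ : Submodule k V) 2, ∀ x : ExteriorAlgebra k V,
    x * y = y * x := by
  intro y hy
  rw [wedgePow, sq] at hy
  refine Submodule.mul_induction_on hy ?_ ?_
  · rintro m ⟨u, -, rfl⟩ m' ⟨w, -, rfl⟩ x
    induction x using ExteriorAlgebra.induction with
    | algebraMap r => rw [← Algebra.commutes r (ι k u * ι k w)]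
    | ι a =>
      rw [← mul_assoc, ι_swap a u, neg_mul, mul_assoc, ι_swap a w, mul_neg, neg_neg,
        ← mul_assoc]
    | mul a b ha hb => rw [mul_assoc, hb, ← mul_assoc, ha, mul_assoc]
    | add a b ha hb => rw [add_mul, mul_add, ha, hb]
  · intro a b ha hb x
    rw [mul_add, add_mul, ha, hb]

/-- The projection `v ↦ v - λ(v)v₀` onto `ker λ`. -/
def piMap (v₀ : V) : V →ₗ[k] V := LinearMap.id - lam.smulRight v₀

lemma piMap_apply (v₀ v : V) : piMap lam v₀ v = v - lam v • v₀ := rfl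

lemma piMap_mem_ker {v₀ : V} (hv₀ : lam v₀ = 1) (v : V) :
    piMap lam v₀ v ∈ LinearMap.ker lam := by
  simp [piMap_apply, hv₀]

lemma ι_piMap (v₀ v : V) :
    ι k (piMap lam v₀ v) = ι k v - lam v • ι k v₀ := by
  rw [piMap_apply, map_sub, map_smul]

/-- The key decomposition `x = P x + v₀ ⌟ (λ ⌟ x)`. -/
lemma decomp {v₀ : V} (hv₀ : lam v₀ = 1) (x : ExteriorAlgebra k V) :
    ExteriorAlgebra.map (piMap lam v₀) x + ι k v₀ * contr lam x = x := by
  set P := ExteriorAlgebra.map (piMap lam v₀) with hP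
  have key : ∀ x y : ExteriorAlgebra k V,
      (P y + ι k v₀ * contr lam y = y) → (P (x * y) + ι k v₀ * contr lam (x * y) = x * y) := by
    intro x
    induction x using ExteriorAlgebra.induction with
    | algebraMap r =>
      intro y h
      have hsm : ∀ z : ExteriorAlgebra k V, algebraMap k _ r * z = r • z := fun z =>
        (Algebra.smul_def r z).symm
      rw [hsm, map_smul, map_smul, mul_smul_comm, ← smul_add, h]
    | ι v =>
      intro y h
      have hy0 : ι k v₀ * y = ι k v₀ * P y := by
        conv_lhs => rw [← h]
        rw [mul_add, ← mul_assoc, ι_sq_zero, zero_mul, add_zero]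
      rw [map_mul, hP]
      rw [ExteriorAlgebra.map_apply_ι, ← hP, ι_piMap, contr_ι_mul, sub_mul, smul_mul_assoc,
        mul_sub, mul_smul_comm, hy0]
      rw [sub_add_sub_cancel]
      rw [← mul_assoc, ι_swap v₀ v, neg_mul, mul_assoc, sub_neg_eq_add, ← mul_add, h]
    | mul a b ha hb =>
      intro y h
      rw [mul_assoc]
      exact ha _ (hb _ h)
    | add a b ha hb =>
      intro y h
      rw [add_mul, map_add, map_add, mul_add, add_add_add_comm, ha _ h, hb _ h]
  have h1 : P 1 + ι k v₀ * contr lam 1 = 1 := by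
    rw [map_one, contr_one, mul_zero, add_zero]
  have := key x 1 h1
  simpa using this

lemma map_pi_mem {v₀ : V} (hv₀ : lam v₀ = 1) :
    ∀ n : ℕ, ∀ x ∈ wedgePow (⊤ : Submodule k V) n,
    ExteriorAlgebra.map (piMap lam v₀) x ∈ wedgePow (LinearMap.ker lam) n := by
  intro n
  induction n with
  | zero =>
    intro x hx
    rw [wedgePow, pow_zero] at hx
    obtain ⟨r, rfl⟩ := Submodule.mem_one.mp hx
    rw [AlgHom.commutes]
    exact mem_one_wedgePow r
  | succ n ih =>
    intro x hx
    rw [wedgePow_succ] at hx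
    refine Submodule.mul_induction_on hx ?_ ?_
    · rintro m ⟨v, -, rfl⟩ y hy
      rw [map_mul, ExteriorAlgebra.map_apply_ι, wedgePow_succ]
      exact Submodule.mul_mem_mul ⟨piMap lam v₀ v, piMap_mem_ker lam hv₀ v, rfl⟩ (ih y hy)
    · intro a b ha hb
      rw [map_add]
      exact Submodule.add_mem _ ha hb

lemma mem_ker_wedgePow {v₀ : V} (hv₀ : lam v₀ = 1) {n : ℕ} {x : ExteriorAlgebra k V}
    (hx : x ∈ wedgePow (⊤ : Submodule k V) n) (hcx : contr lam x = 0) :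
    x ∈ wedgePow (LinearMap.ker lam) n := by
  have h := decomp lam hv₀ x
  rw [hcx, mul_zero, add_zero] at h
  rw [← h]
  exact map_pi_mem lam hv₀ n x hx

lemma exists_span_wedgePow (U : Submodule k V) {n : ℕ} [Module.Finite k U]
    (hU : Module.finrank k U = n) :
    ∃ g : ExteriorAlgebra k V, wedgePow U n ≤ Submodule.span k {g} := by
  classical
  let b : Module.Basis (Fin n) k U := Module.finBasisOfFinrankEq k U hU
  let J : ExteriorAlgebra k U →ₐ[k] ExteriorAlgebra k V := ExteriorAlgebra.map U.subtype
  refine ⟨J (ExteriorAlgebra.ιMulti k n ⇑b), ?_⟩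
  have hbase : Submodule.map (ι k) U
      = Submodule.map J.toLinearMap (LinearMap.range (ι k : U →ₗ[k] ExteriorAlgebra k U)) := by
    ext x
    constructor
    · rintro ⟨u, hu, rfl⟩
      exact ⟨ι k (⟨u, hu⟩ : U), LinearMap.mem_range_self _ _,
        by simp [J, ExteriorAlgebra.map_apply_ι]⟩
    · rintro ⟨y, ⟨u, rfl⟩, rfl⟩
      exact ⟨↑u, u.2, by simp [J, ExteriorAlgebra.map_apply_ι]⟩
  have hmap : wedgePow U n = Submodule.map J.toLinearMap (⋀[k]^n U) := by
    rw [wedgePow, hbase, ← Submodule.map_pow]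
  have halt : (ExteriorAlgebra.ιMulti k n : U [⋀^Fin n]→ₗ[k] ExteriorAlgebra k U)
      = (LinearMap.toSpanSingleton k _
          (ExteriorAlgebra.ιMulti k n ⇑b)).compAlternatingMap b.det := by
    refine Module.Basis.ext_alternating b fun i hi => ?_
    let σ : Equiv.Perm (Fin n) := Equiv.ofBijective i (Finite.injective_iff_bijective.1 hi)
    have hfun : (fun x => b (i x)) = (⇑b ∘ ⇑σ) := rfl
    have h1 : (ExteriorAlgebra.ιMulti k n (M := U)) (fun x => b (i x))
        = Equiv.Perm.sign σ • (ExteriorAlgebra.ιMulti k n (M := U)) ⇑b := by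
      rw [hfun]; exact AlternatingMap.map_perm _ ⇑b σ
    have h2 : (b.det fun j => b (i j)) = Equiv.Perm.sign σ • (1 : k) := by
      rw [hfun]
      rw [show b.det (⇑b ∘ ⇑σ) = Equiv.Perm.sign σ • b.det ⇑b from AlternatingMap.map_perm _ ⇑b σ,
        Module.Basis.det_self]
    simp only [LinearMap.compAlternatingMap_apply, LinearMap.toSpanSingleton_apply]
    rcases Int.units_eq_one_or (Equiv.Perm.sign σ) with hs | hs <;> rw [h1, h2, hs] <;> simp
  have hspan : (⋀[k]^n U) ≤ Submodule.span k {ExteriorAlgebra.ιMulti k n ⇑b} := by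
    rw [← ExteriorAlgebra.ιMulti_span_fixedDegree, Submodule.span_le]
    rintro _ ⟨w, rfl⟩
    refine Submodule.mem_span_singleton.mpr ⟨b.det w, ?_⟩
    conv_rhs => rw [halt]
    simp [LinearMap.toSpanSingleton_apply, LinearMap.compAlternatingMap_apply]
  rw [hmap]
  refine le_trans (Submodule.map_mono hspan) ?_
  rw [Submodule.map_span, Set.image_singleton]
  exact le_of_eq (by simp)


lemma mem_wedgePow_mul' {U : Submodule k V} {m n p : ℕ} (h : m + n = p)
    {x y : ExteriorAlgebra k V}
    (hx : x ∈ wedgePow U m) (hy : y ∈ wedgePow U n) : x * y ∈ wedgePow U p :=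
  h ▸ mem_wedgePow_mul hx hy

end LagGM

set_option maxHeartbeats 2000000

/-- **Lagrangian datum to GM datum.**  Let `char k ≠ 2`, `dim V₆ = 6`, `0 ≠ λ ∈ V₆∨` with
kernel `V₅`, and `A ⊆ ⋀³V₆` Lagrangian.  Put `W = λ⌟A` (a subspace of `⋀²V₅`) and fix a
nonzero `e ∈ ⋀⁵V₅`.  Then there is a unique linear map `q` from `V₆` to bilinear forms on
`W` with `q(v)(λ⌟ξ, λ⌟ξ′)·e = v∧(λ⌟ξ)∧(λ⌟ξ′) − λ(v)·(ξ∧(λ⌟ξ′))` for all `v, ξ, ξ′`;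
moreover each `q(v)` is symmetric, and `q(v)(w, w′)·e = v∧w∧w′` for `v ∈ V₅`, `w, w′ ∈ W`. -/
theorem lagrangian_to_gm_datum
    {k V₆ : Type*} [Field k] [AddCommGroup V₆] [Module k V₆]
    (hchar : ringChar k ≠ 2) (hdim : Module.finrank k V₆ = 6)
    (lam : Module.Dual k V₆) (hlam : lam ≠ 0)
    (A : Submodule k (ExteriorAlgebra k V₆))
    (hA3 : A ≤ wedgePow (⊤ : Submodule k V₆) 3)
    (hA10 : Module.finrank k A = 10)
    (hLag : ∀ a ∈ A, ∀ a' ∈ A, a * a' = 0)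
    (e : ExteriorAlgebra k V₆)
    (he : e ∈ wedgePow (LinearMap.ker lam) 5) (he0 : e ≠ 0) :
    Submodule.map (contr lam) A ≤ wedgePow (LinearMap.ker lam) 2 ∧
    ∃ q : V₆ →ₗ[k] ↥(Submodule.map (contr lam) A) →ₗ[k]
        ↥(Submodule.map (contr lam) A) →ₗ[k] k,
      IsGMQuadricFor lam A e q ∧
      (∀ (v : V₆) (w w' : ↥(Submodule.map (contr lam) A)), q v w w' = q v w' w) ∧
      (∀ v ∈ LinearMap.ker lam, ∀ w w' : ↥(Submodule.map (contr lam) A),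
        q v w w' • e = ExteriorAlgebra.ι k v * (w : ExteriorAlgebra k V₆) *
          (w' : ExteriorAlgebra k V₆)) ∧
      (∀ q' : V₆ →ₗ[k] ↥(Submodule.map (contr lam) A) →ₗ[k]
          ↥(Submodule.map (contr lam) A) →ₗ[k] k,
        IsGMQuadricFor lam A e q' → q' = q) := by
  classical
  obtain ⟨u, hu⟩ : ∃ u, lam u ≠ 0 := by
    by_contra h
    push_neg at h
    exact hlam (LinearMap.ext fun v => h v)
  set v₀ : V₆ := (lam u)⁻¹ • u with hv₀def
  have hv₀ : lam v₀ = 1 := by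
    simp [v₀, inv_mul_cancel₀ hu]
  have hfd : FiniteDimensional k V₆ := Module.finite_of_finrank_pos (by omega)
  -- Part 1
  have hW2 : ∀ ξ ∈ A, contr lam ξ ∈ wedgePow (LinearMap.ker lam) 2 := fun ξ hξ =>
    LagGM.mem_ker_wedgePow lam hv₀ (LagGM.contr_mem lam 2 ξ (hA3 hξ)) (LagGM.contr_contr lam ξ)
  have part1 : Submodule.map (contr lam) A ≤ wedgePow (LinearMap.ker lam) 2 := by
    rintro x ⟨ξ, hξ, rfl⟩; exact hW2 ξ hξ
  refine ⟨part1, ?_⟩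
  -- dimension of the kernel
  have hker5 : Module.finrank k (LinearMap.ker lam) = 5 := by
    have hr : LinearMap.range lam = ⊤ := by
      rw [LinearMap.range_eq_top]
      intro x
      exact ⟨(x * (lam u)⁻¹) • u, by rw [map_smul, smul_eq_mul, inv_mul_cancel_right₀ hu]⟩
    have h := LinearMap.finrank_range_add_finrank_ker lam
    rw [hr, finrank_top, Module.finrank_self, hdim] at h
    omega
  -- the 5th wedge power of the kernel is spanned by e
  obtain ⟨g, hg⟩ := LagGM.exists_span_wedgePow (LinearMap.ker lam) (n := 5) hker5
  have hEe : wedgePow (LinearMap.ker lam) 5 = Submodule.span k {e} := by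
    refine le_antisymm ?_ ?_
    · obtain ⟨c, hc⟩ := Submodule.mem_span_singleton.mp (hg he)
      have hc0 : c ≠ 0 := by rintro rfl; rw [zero_smul] at hc; exact he0 hc.symm
      refine le_trans hg (le_of_eq ?_)
      rw [← hc, Submodule.span_singleton_smul_eq (IsUnit.mk0 c hc0) g]
    · rw [Submodule.span_le, Set.singleton_subset_iff]; exact he
  -- the coordinate functional
  obtain ⟨l, hl⟩ := LinearMap.exists_extend
    ((LinearEquiv.coord k (ExteriorAlgebra k V₆) e he0).toLinearMap)
  have hle : ∀ z ∈ wedgePow (LinearMap.ker lam) 5, l z • e = z := by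
    intro z hz
    have hz' : z ∈ Submodule.span k {e} := hEe ▸ hz
    have h1 : l z = LinearEquiv.coord k (ExteriorAlgebra k V₆) e he0 ⟨z, hz'⟩ :=
      LinearMap.ext_iff.mp hl ⟨z, hz'⟩
    rw [h1]
    exact LinearEquiv.coord_apply_smul k (ExteriorAlgebra k V₆) e he0 ⟨z, hz'⟩
  -- the linear section of contraction
  let f : A →ₗ[k] ↥(Submodule.map (contr lam) A) :=
    LinearMap.codRestrict _ ((contr lam).comp A.subtype)
      (fun ξ => Submodule.mem_map_of_mem ξ.2)
  have hfsurj : LinearMap.range f = ⊤ := by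
    rw [LinearMap.range_eq_top]
    rintro ⟨x, ξ, hξ, rfl⟩
    exact ⟨⟨ξ, hξ⟩, rfl⟩
  haveI hproj : Module.Projective k ↥(Submodule.map (contr lam) A) :=
    Module.Projective.of_basis (Module.Basis.ofVectorSpace k _)
  obtain ⟨σ, hσ⟩ := f.exists_rightInverse_of_surjective hfsurj
  have hCσ : ∀ w : ↥(Submodule.map (contr lam) A), contr lam ↑(σ w) = ↑w := by
    intro w
    have h1 : f (σ w) = w := by rw [← LinearMap.comp_apply, hσ]; rfl
    exact congrArg Subtype.val h1
  have hσA : ∀ w : ↥(Submodule.map (contr lam) A),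
      (↑(σ w) : ExteriorAlgebra k V₆) ∈ A := fun w => (σ w).2
  -- Lagrangian swap identity
  have lag_swap : ∀ ξ ∈ A, ∀ ξ' ∈ A,
      contr lam ξ * ξ' = ξ * contr lam ξ' := by
    intro ξ hξ ξ' hξ'
    have h := LagGM.contr_mul lam 3 ξ (hA3 hξ) ξ'
    rw [hLag ξ hξ ξ' hξ', map_zero] at h
    have h3 : ((-1 : k) ^ 3) • (ξ * contr lam ξ') = -(ξ * contr lam ξ') := by
      norm_num
    rw [h3, ← sub_eq_add_neg] at h
    exact sub_eq_zero.mp h.symm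
  have hC2 : ∀ ξ ∈ A, contr lam ξ ∈ wedgePow (⊤ : Submodule k V₆) 2 := fun ξ hξ =>
    LagGM.contr_mem lam 2 ξ (hA3 hξ)
  -- membership of the defining expression in the 5th wedge power of the kernel
  have zmem : ∀ (v : V₆), ∀ ξ ∈ A, ∀ ξ' ∈ A,
      ExteriorAlgebra.ι k v * contr lam ξ * contr lam ξ' - lam v • (ξ * contr lam ξ')
        ∈ wedgePow (LinearMap.ker lam) 5 := by
    intro v ξ hξ ξ' hξ'
    have hξd : ξ = ExteriorAlgebra.map (LagGM.piMap lam v₀) ξ + ExteriorAlgebra.ι k v₀ * contr lam ξ :=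
      (LagGM.decomp lam hv₀ ξ).symm
    have hvd : ExteriorAlgebra.ι k v
        = ExteriorAlgebra.ι k (LagGM.piMap lam v₀ v) + lam v • ExteriorAlgebra.ι k v₀ := by
      rw [LagGM.ι_piMap, sub_add_cancel]
    have h2 : ξ * contr lam ξ' = ExteriorAlgebra.map (LagGM.piMap lam v₀) ξ * contr lam ξ'
        + ExteriorAlgebra.ι k v₀ * (contr lam ξ * contr lam ξ') := by
      conv_lhs => rw [hξd]
      rw [add_mul, mul_assoc]
    have key : ExteriorAlgebra.ι k v * contr lam ξ * contr lam ξ' - lam v • (ξ * contr lam ξ')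
        = ExteriorAlgebra.ι k (LagGM.piMap lam v₀ v) * contr lam ξ * contr lam ξ'
          - lam v • (ExteriorAlgebra.map (LagGM.piMap lam v₀) ξ * contr lam ξ') := by
      rw [hvd, h2]
      simp only [add_mul, smul_mul_assoc, smul_add, mul_assoc]
      abel
    rw [key]
    refine Submodule.sub_mem _ ?_ (Submodule.smul_mem _ _ ?_)
    · have h1 : ExteriorAlgebra.ι k (LagGM.piMap lam v₀ v) ∈ wedgePow (LinearMap.ker lam) 1 := by
        rw [wedgePow, pow_one]
        exact ⟨LagGM.piMap lam v₀ v, LagGM.piMap_mem_ker lam hv₀ v, rfl⟩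
      exact LagGM.mem_wedgePow_mul' (by norm_num)
        (LagGM.mem_wedgePow_mul' (by norm_num) h1 (hW2 ξ hξ) (p := 3)) (hW2 ξ' hξ')
    · exact LagGM.mem_wedgePow_mul' (by norm_num)
        (LagGM.map_pi_mem lam hv₀ 3 ξ (hA3 hξ)) (hW2 ξ' hξ')
  -- symmetry of the defining expression
  have zsymm : ∀ (v : V₆), ∀ ξ ∈ A, ∀ ξ' ∈ A,
      ExteriorAlgebra.ι k v * contr lam ξ * contr lam ξ' - lam v • (ξ * contr lam ξ')
      = ExteriorAlgebra.ι k v * contr lam ξ' * contr lam ξ - lam v • (ξ' * contr lam ξ) := by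
    intro v ξ hξ ξ' hξ'
    have c1 := LagGM.central _ (hC2 ξ hξ)
    have c2 := LagGM.central _ (hC2 ξ' hξ')
    have t1 : ExteriorAlgebra.ι k v * contr lam ξ * contr lam ξ'
        = ExteriorAlgebra.ι k v * contr lam ξ' * contr lam ξ := by
      rw [mul_assoc, c2 (contr lam ξ), ← mul_assoc]
    have t2 : ξ * contr lam ξ' = ξ' * contr lam ξ := by
      rw [← lag_swap ξ hξ ξ' hξ']
      exact (c1 ξ').symm
    rw [t1, t2]
  -- the quadratic form
  let q : V₆ →ₗ[k] ↥(Submodule.map (contr lam) A) →ₗ[k]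
      ↥(Submodule.map (contr lam) A) →ₗ[k] k :=
  { toFun := fun v =>
    { toFun := fun w => l ∘ₗ ((LinearMap.mulLeft k (ExteriorAlgebra.ι k v * ↑w)
          - lam v • LinearMap.mulLeft k (↑(σ w) : ExteriorAlgebra k V₆))
          ∘ₗ (Submodule.map (contr lam) A).subtype)
      map_add' := by
        intro w₁ w₂
        ext w'
        show l (ExteriorAlgebra.ι k v * ↑(w₁ + w₂) * ↑w'
              - lam v • ((↑(σ (w₁ + w₂)) : ExteriorAlgebra k V₆) * ↑w'))
            = l (ExteriorAlgebra.ι k v * ↑w₁ * ↑w'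
              - lam v • ((↑(σ w₁) : ExteriorAlgebra k V₆) * ↑w'))
            + l (ExteriorAlgebra.ι k v * ↑w₂ * ↑w'
              - lam v • ((↑(σ w₂) : ExteriorAlgebra k V₆) * ↑w'))
        rw [← l.map_add]
        congr 1
        rw [Submodule.coe_add, map_add σ, Submodule.coe_add]
        simp only [mul_add, add_mul, smul_add]
        abel
      map_smul' := by
        intro c w
        ext w'
        show l (ExteriorAlgebra.ι k v * ↑(c • w) * ↑w'
              - lam v • ((↑(σ (c • w)) : ExteriorAlgebra k V₆) * ↑w'))
            = c • l (ExteriorAlgebra.ι k v * ↑w * ↑w'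
              - lam v • ((↑(σ w) : ExteriorAlgebra k V₆) * ↑w'))
        rw [← l.map_smul]
        congr 1
        rw [Submodule.coe_smul, LinearMap.map_smul σ, Submodule.coe_smul]
        simp only [smul_mul_assoc, mul_smul_comm, smul_sub, smul_comm (lam v) c] }
    map_add' := by
      intro v₁ v₂
      ext w w'
      show l (ExteriorAlgebra.ι k (v₁ + v₂) * ↑w * ↑w'
            - lam (v₁ + v₂) • ((↑(σ w) : ExteriorAlgebra k V₆) * ↑w'))
          = l (ExteriorAlgebra.ι k v₁ * ↑w * ↑w'
            - lam v₁ • ((↑(σ w) : ExteriorAlgebra k V₆) * ↑w'))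
          + l (ExteriorAlgebra.ι k v₂ * ↑w * ↑w'
            - lam v₂ • ((↑(σ w) : ExteriorAlgebra k V₆) * ↑w'))
      rw [← l.map_add]
      congr 1
      rw [map_add (ExteriorAlgebra.ι k), map_add lam]
      simp only [add_mul, add_smul]
      abel
    map_smul' := by
      intro c v
      ext w w'
      show l (ExteriorAlgebra.ι k (c • v) * ↑w * ↑w'
            - lam (c • v) • ((↑(σ w) : ExteriorAlgebra k V₆) * ↑w'))
          = c • l (ExteriorAlgebra.ι k v * ↑w * ↑w'
            - lam v • ((↑(σ w) : ExteriorAlgebra k V₆) * ↑w'))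
      rw [← l.map_smul]
      congr 1
      rw [LinearMap.map_smul (ExteriorAlgebra.ι k), LinearMap.map_smul lam]
      simp only [smul_mul_assoc, smul_sub, smul_smul, smul_eq_mul] }
  have qapp : ∀ (v : V₆) (w w' : ↥(Submodule.map (contr lam) A)),
      q v w w' = l (ExteriorAlgebra.ι k v * ↑w * ↑w'
        - lam v • ((↑(σ w) : ExteriorAlgebra k V₆) * ↑w')) := fun _ _ _ => rfl
  -- the defining property
  have hq : IsGMQuadricFor lam A e q := by
    intro v ξ hξ ξ' hξ'
    rw [qapp]
    have hsw : (↑(σ ⟨contr lam ξ, Submodule.mem_map_of_mem hξ⟩) : ExteriorAlgebra k V₆)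
        * contr lam ξ' = ξ * contr lam ξ' := by
      rw [← lag_swap _ (hσA _) _ hξ', hCσ]
      exact lag_swap ξ hξ ξ' hξ'
    rw [hsw]
    exact hle _ (zmem v ξ hξ ξ' hξ')
  refine ⟨q, hq, ?_, ?_, ?_⟩
  · -- symmetry
    intro v w w'
    rw [qapp, qapp]
    congr 1
    conv_lhs => rw [← hCσ w, ← hCσ w']
    conv_rhs => rw [← hCσ w, ← hCσ w']
    exact zsymm v _ (hσA w) _ (hσA w')
  · -- restriction to the kernel
    intro v hv w w'
    have hv0 : lam v = 0 := hv
    rw [qapp, hv0, zero_smul, sub_zero]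
    refine hle _ ?_
    have h1 : ExteriorAlgebra.ι k v ∈ wedgePow (LinearMap.ker lam) 1 := by
      rw [wedgePow, pow_one]
      exact ⟨v, hv, rfl⟩
    exact LagGM.mem_wedgePow_mul' (by norm_num)
      (LagGM.mem_wedgePow_mul' (by norm_num) h1 (part1 w.2) (p := 3)) (part1 w'.2)
  · -- uniqueness
    intro q' hq'
    ext v w w'
    obtain ⟨ξ, hξ, hw⟩ := w.2
    obtain ⟨ξ', hξ', hw'⟩ := w'.2
    have hwe : w = ⟨contr lam ξ, Submodule.mem_map_of_mem hξ⟩ := Subtype.ext hw.symm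
    have hwe' : w' = ⟨contr lam ξ', Submodule.mem_map_of_mem hξ'⟩ := Subtype.ext hw'.symm
    rw [hwe, hwe']
    have h1 := hq' v ξ hξ ξ' hξ'
    have h2 := hq v ξ hξ ξ' hξ'
    have h3 : (q' v ⟨contr lam ξ, Submodule.mem_map_of_mem hξ⟩
          ⟨contr lam ξ', Submodule.mem_map_of_mem hξ'⟩
        - q v ⟨contr lam ξ, Submodule.mem_map_of_mem hξ⟩
          ⟨contr lam ξ', Submodule.mem_map_of_mem hξ'⟩) • e = 0 := by
      rw [sub_smul, h1, h2, sub_self]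
    rcases smul_eq_zero.mp h3 with h | h
    · exact sub_eq_zero.mp h
    · exact absurd h he0
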